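/- arXiv:math/0308204 — 5 statements merged into one kernel-verified Lean document; each statement's English description precedes it below -/
import Mathlib

section
/- Let M ⊆ ℝ^{n+1} be a Lebesgue-measurable set that is directed with respect to v ∈ ℝ^{n+1} \ {0}. If x ∈ ℝ^{n+1} and t > 0 are such that x ∈ ∂M and x + t·v ∈ ∂M (measure-theoretic boundary), then x + τ·v ∈ ∂M for all 0 ≤ τ ≤ t. -/
open MeasureTheory Metric

/-- Approximate density of a set `M` at `x` with respect to radius `ρ`. -/
noncomputable def approxDensity {d : ℕ} (M : Set (EuclideanSpace ℝ (Fin d))) (ρ : ℝ)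
    (x : EuclideanSpace ℝ (Fin d)) : ENNReal :=
  volume (M ∩ ball x ρ) / volume (ball x ρ)

/-- `M` is directed with respect to `v`. -/
def DirectedWrt {d : ℕ} (M : Set (EuclideanSpace ℝ (Fin d)))
    (v : EuclideanSpace ℝ (Fin d)) : Prop :=
  ∀ x : EuclideanSpace ℝ (Fin d), ∀ ρ : ℝ, 0 < ρ →
    Antitone (fun t : ℝ => approxDensity M ρ (x + t • v))

/-- Measure-theoretic interior. -/
def mInterior {d : ℕ} (M : Set (EuclideanSpace ℝ (Fin d))) :
    Set (EuclideanSpace ℝ (Fin d)) :=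
  {x | ∃ ρ > (0 : ℝ), volume (ball x ρ \ M) = 0}

/-- Measure-theoretic exterior. -/
def mExterior {d : ℕ} (M : Set (EuclideanSpace ℝ (Fin d))) :
    Set (EuclideanSpace ℝ (Fin d)) :=
  {x | ∃ ρ > (0 : ℝ), volume (M ∩ ball x ρ) = 0}

/-- Measure-theoretic boundary. -/
def mBoundary {d : ℕ} (M : Set (EuclideanSpace ℝ (Fin d))) :
    Set (EuclideanSpace ℝ (Fin d)) :=
  (mInterior M ∪ mExterior M)ᶜ

/-! Directedness makes the density at every radius decrease along `v`. Density one on a ball is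
measure-theoretic interior and density zero is measure-theoretic exterior, so interior points
propagate backwards along `v` and exterior points forwards. A point of the segment in the interior
would therefore put `x` in the interior, and one in the exterior would put `x + t • v` in the
exterior. -/

theorem approxDensity_eq_zero_iff {d : ℕ} (M : Set (EuclideanSpace ℝ (Fin d))) (ρ : ℝ)
    (y : EuclideanSpace ℝ (Fin d)) :
    approxDensity M ρ y = 0 ↔ volume (M ∩ ball y ρ) = 0 := by
  simp [approxDensity, ENNReal.div_eq_zero_iff, measure_ball_lt_top.ne]

theorem one_le_approxDensity_iff {d : ℕ} {M : Set (EuclideanSpace ℝ (Fin d))}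
    (hM : MeasurableSet M) {ρ : ℝ} (hρ : 0 < ρ) (y : EuclideanSpace ℝ (Fin d)) :
    1 ≤ approxDensity M ρ y ↔ volume (ball y ρ \ M) = 0 := by
  have hfin : volume (ball y ρ) ≠ ⊤ := measure_ball_lt_top.ne
  rw [approxDensity, Set.inter_comm, ENNReal.le_div_iff_mul_le
    (Or.inl (measure_ball_pos volume y hρ).ne') (Or.inl hfin), one_mul, ← Set.sdiff_self_inter,
    measure_sdiff Set.inter_subset_left (measurableSet_ball.inter hM).nullMeasurableSet
      (measure_ne_top_of_subset Set.inter_subset_left hfin), tsub_eq_zero_iff_le]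

namespace DirectedWrt

variable {d : ℕ} {M : Set (EuclideanSpace ℝ (Fin d))} {v : EuclideanSpace ℝ (Fin d)}

theorem mem_mInterior_of_le (hdir : DirectedWrt M v) (hM : MeasurableSet M)
    (x : EuclideanSpace ℝ (Fin d)) {s τ : ℝ} (hsτ : s ≤ τ)
    (hτ : x + τ • v ∈ mInterior M) : x + s • v ∈ mInterior M := by
  obtain ⟨ρ, hρ, hnull⟩ := hτ
  refine ⟨ρ, hρ, (one_le_approxDensity_iff hM hρ _).mp ?_⟩
  exact ((one_le_approxDensity_iff hM hρ _).mpr hnull).trans (hdir x ρ hρ hsτ)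

theorem mem_mExterior_of_le (hdir : DirectedWrt M v)
    (x : EuclideanSpace ℝ (Fin d)) {s τ : ℝ} (hsτ : s ≤ τ)
    (hs : x + s • v ∈ mExterior M) : x + τ • v ∈ mExterior M := by
  obtain ⟨ρ, hρ, hnull⟩ := hs
  refine ⟨ρ, hρ, (approxDensity_eq_zero_iff M ρ _).mp ?_⟩
  exact le_antisymm ((hdir x ρ hρ hsτ).trans_eq ((approxDensity_eq_zero_iff M ρ _).mpr hnull))
    zero_le

end DirectedWrt

theorem boundary_segment_of_directed_general {n : ℕ}
    (M : Set (EuclideanSpace ℝ (Fin (n + 1)))) (hM : MeasurableSet M)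
    (v : EuclideanSpace ℝ (Fin (n + 1)))
    (hdir : DirectedWrt M v)
    (x : EuclideanSpace ℝ (Fin (n + 1))) (t : ℝ)
    (hx : x ∈ mBoundary M) (hxt : x + t • v ∈ mBoundary M) :
    ∀ τ : ℝ, 0 ≤ τ → τ ≤ t → x + τ • v ∈ mBoundary M := by
  rintro τ hτ0 hτt (hint | hext)
  · refine hx (Or.inl ?_)
    simpa using hdir.mem_mInterior_of_le hM x hτ0 hint
  · exact hxt (Or.inr (hdir.mem_mExterior_of_le x hτt hext))

theorem boundary_segment_of_directed {n : ℕ}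
    (M : Set (EuclideanSpace ℝ (Fin (n + 1)))) (hM : MeasurableSet M)
    (v : EuclideanSpace ℝ (Fin (n + 1))) (hv : v ≠ 0)
    (hdir : DirectedWrt M v)
    (x : EuclideanSpace ℝ (Fin (n + 1))) (t : ℝ) (ht : 0 < t)
    (hx : x ∈ mBoundary M) (hxt : x + t • v ∈ mBoundary M) :
    ∀ τ : ℝ, 0 ≤ τ → τ ≤ t → x + τ • v ∈ mBoundary M :=
  boundary_segment_of_directed_general M hM v hdir x t hx hxt
end

section
/- Let φ : ℝ^n → [−∞,+∞] be a measurable function and E := sub φ ⊆ ℝ^{n+1} its subgraph. Let t_i > 0 with t_i → 0, and suppose the sets E_{t_i} := {x ∈ ℝ^{n+1} : t_i·x ∈ E} converge in L¹_loc(ℝ^{n+1}) to a measurable set C, i.e. ∫_K |χ_{E_{t_i}} − χ_C| dλ → 0 for every compact K ⊆ ℝ^{n+1}. Then C is directed with respect to e_{n+1}. -/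
/-!
A subgraph is stable under moving down along `e_{n+1}`, and so is every positive rescaling of
it. For such a set, translation invariance of Lebesgue measure makes its mass in a ball
antitone as the ball moves up along `e_{n+1}`. Convergence in `L¹_loc` gives convergence of
the mass in every ball, so this monotonicity passes to the limit `C`; dividing by the volume of
the ball, which does not depend on its centre, gives directedness.
-/

open MeasureTheory Metric

/-- The subgraph of an extended-real-valued function on `ℝⁿ`, as a subset of `ℝⁿ⁺¹`.
The first `n` coordinates are the base point, the last coordinate is the height. -/
def subgraph {n : ℕ} (φ : EuclideanSpace ℝ (Fin n) → EReal) :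
    Set (EuclideanSpace ℝ (Fin (n + 1))) :=
  {x | (x (Fin.last n) : EReal) < φ (WithLp.toLp 2 (fun i : Fin n => x i.castSucc))}

/-- `L¹_loc` convergence of a sequence of sets to a set, via characteristic functions. -/
def L1locConvergesTo {d : ℕ} (A : ℕ → Set (EuclideanSpace ℝ (Fin d)))
    (C : Set (EuclideanSpace ℝ (Fin d))) : Prop :=
  ∀ K : Set (EuclideanSpace ℝ (Fin d)), IsCompact K →
    Filter.Tendsto
      (fun i => ∫ y in K,
        |Set.indicator (A i) (fun _ => (1 : ℝ)) y - Set.indicator C (fun _ => (1 : ℝ)) y|)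
      Filter.atTop (nhds 0)

open Filter Topology
open scoped symmDiff ENNReal

def IsDownClosedAlong {E : Type*} [AddCommGroup E] [Module ℝ E] (M : Set E) (v : E) : Prop :=
  ∀ x ∈ M, ∀ r : ℝ, 0 ≤ r → x - r • v ∈ M

namespace IsDownClosedAlong

variable {E : Type*} {M : Set E} {v : E}

theorem preimage_smul [AddCommGroup E] [Module ℝ E] (h : IsDownClosedAlong M v) {c : ℝ}
    (hc : 0 ≤ c) : IsDownClosedAlong {x | c • x ∈ M} v := by
  intro x hx r hr
  simpa [smul_sub, smul_smul] using h _ hx (c * r) (mul_nonneg hc hr)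

theorem antitone_measure_inter_ball [NormedAddCommGroup E] [Module ℝ E] [MeasurableSpace E]
    [MeasurableAdd E] (h : IsDownClosedAlong M v) (μ : Measure E) [μ.IsAddRightInvariant]
    (x : E) (ρ : ℝ) : Antitone fun s : ℝ => μ (M ∩ ball (x + s • v) ρ) := by
  intro s s' hss
  calc μ (M ∩ ball (x + s' • v) ρ)
      = μ ((· + (s' - s) • v) ⁻¹' (M ∩ ball (x + s' • v) ρ)) :=
        (measure_preimage_add_right μ _ _).symm
    _ ≤ μ (M ∩ ball (x + s • v) ρ) := by
        refine measure_mono fun y ⟨hyM, hyB⟩ => ⟨?_, ?_⟩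
        · simpa using h _ hyM (s' - s) (sub_nonneg.2 hss)
        · have hshift : y + (s' - s) • v - (x + s' • v) = y - (x + s • v) := by
            rw [sub_smul]; abel
          simpa [mem_ball, dist_eq_norm, hshift] using hyB

end IsDownClosedAlong

theorem isDownClosedAlong_subgraph {n : ℕ} (φ : EuclideanSpace ℝ (Fin n) → EReal) :
    IsDownClosedAlong (subgraph φ) (EuclideanSpace.single (Fin.last n) 1) := by
  intro x hx r hr
  simp only [subgraph, Set.mem_ofPred_eq] at hx ⊢
  have hbase : (fun i : Fin n => (x - r • EuclideanSpace.single (Fin.last n) (1 : ℝ)) i.castSucc)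
      = fun i => x i.castSucc := by
    funext i
    simp [(Fin.castSucc_lt_last i).ne]
  rw [hbase]
  refine lt_of_le_of_lt ?_ hx
  simp only [PiLp.sub_apply, PiLp.smul_apply, PiLp.single_apply, if_pos, smul_eq_mul, mul_one]
  exact_mod_cast sub_le_self _ hr

theorem measurableSet_subgraph {n : ℕ} {φ : EuclideanSpace ℝ (Fin n) → EReal}
    (hφ : Measurable φ) : MeasurableSet (subgraph φ) :=
  measurableSet_lt (by fun_prop) (hφ.comp (by fun_prop))

theorem directedWrt_of_antitone_measure_inter_ball {d : ℕ} {M : Set (EuclideanSpace ℝ (Fin d))}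
    {v : EuclideanSpace ℝ (Fin d)}
    (h : ∀ x ρ, Antitone fun s : ℝ => volume (M ∩ ball (x + s • v) ρ)) : DirectedWrt M v := by
  intro x ρ _ s s' hss
  simp only [approxDensity, Measure.addHaar_ball_center volume (x + _ • v)]
  exact ENNReal.div_le_div_right (h x ρ hss) _

theorem tendsto_measureReal_inter_of_tendsto_setIntegral_abs_indicator_sub {α ι : Type*}
    [MeasurableSpace α] {μ : Measure α} {l : Filter ι} {A : ι → Set α} {B C K : Set α}
    (hA : ∀ i, MeasurableSet (A i)) (hC : MeasurableSet C) (hB : MeasurableSet B)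
    (hBK : B ⊆ K) (hK : μ K ≠ ∞)
    (h : Tendsto (fun i => ∫ y in K,
      |(A i).indicator (fun _ => (1 : ℝ)) y - C.indicator (fun _ => (1 : ℝ)) y| ∂μ) l (𝓝 0)) :
    Tendsto (fun i => μ.real (A i ∩ B)) l (𝓝 (μ.real (C ∩ B))) := by
  have hintegral : ∀ i, ∫ y in K,
      |(A i).indicator (fun _ => (1 : ℝ)) y - C.indicator (fun _ => (1 : ℝ)) y| ∂μ
        = μ.real (A i ∆ C ∩ K) := by
    intro i
    simp_rw [← Set.abs_indicator_symmDiff,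
      abs_of_nonneg (Set.indicator_nonneg (fun _ _ => zero_le_one) _)]
    rw [setIntegral_indicator ((hA i).symmDiff hC), setIntegral_const, Set.inter_comm]
    simp
  have hbound : ∀ i, |μ.real (A i ∩ B) - μ.real (C ∩ B)| ≤ μ.real (A i ∆ C ∩ K) := by
    intro i
    have hfin : ∀ S, μ (S ∩ B) ≠ ∞ := fun S =>
      ne_top_of_le_ne_top hK (measure_mono (Set.inter_subset_right.trans hBK))
    calc |μ.real (A i ∩ B) - μ.real (C ∩ B)|
        ≤ μ.real ((A i ∩ B) ∆ (C ∩ B)) :=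
          abs_measureReal_sub_le_measureReal_symmDiff' ((hA i).inter hB).nullMeasurableSet
            (hC.inter hB).nullMeasurableSet (hfin _) (hfin _)
      _ = μ.real (A i ∆ C ∩ B) := by rw [Set.inter_symmDiff_distrib_right]
      _ ≤ μ.real (A i ∆ C ∩ K) :=
          measureReal_mono (by gcongr)
            (ne_top_of_le_ne_top hK (measure_mono Set.inter_subset_right))
  rw [tendsto_iff_norm_sub_tendsto_zero]
  exact squeeze_zero (fun _ => norm_nonneg _) (fun i => (hbound i).trans_eq (hintegral i).symm) h

theorem L1locConvergesTo.tendsto_measure_inter_ball {d : ℕ}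
    {A : ℕ → Set (EuclideanSpace ℝ (Fin d))} {C : Set (EuclideanSpace ℝ (Fin d))}
    (h : L1locConvergesTo A C) (hA : ∀ i, MeasurableSet (A i)) (hC : MeasurableSet C)
    (x : EuclideanSpace ℝ (Fin d)) (ρ : ℝ) :
    Tendsto (fun i => volume (A i ∩ ball x ρ)) atTop (𝓝 (volume (C ∩ ball x ρ))) := by
  rw [← ENNReal.tendsto_toReal_iff (fun i => by finiteness) (by finiteness)]
  exact tendsto_measureReal_inter_of_tendsto_setIntegral_abs_indicator_sub hA hC measurableSet_ball
    ball_subset_closedBall measure_closedBall_lt_top.ne (h _ (isCompact_closedBall x ρ))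

theorem blowup_of_subgraph_is_directed_general {n : ℕ}
    (φ : EuclideanSpace ℝ (Fin n) → EReal) (hφ : Measurable φ)
    (t : ℕ → ℝ) (ht : ∀ i, 0 < t i)
    (C : Set (EuclideanSpace ℝ (Fin (n + 1)))) (hC : MeasurableSet C)
    (hconv : L1locConvergesTo (fun i => {x | t i • x ∈ subgraph φ}) C) :
    DirectedWrt C (EuclideanSpace.single (Fin.last n) 1) := by
  have hdown : ∀ i, IsDownClosedAlong {x | t i • x ∈ subgraph φ}
      (EuclideanSpace.single (Fin.last n) 1) :=
    fun i => (isDownClosedAlong_subgraph φ).preimage_smul (ht i).le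
  have hmeas : ∀ i, MeasurableSet {x | t i • x ∈ subgraph φ} :=
    fun i => measurable_const_smul (t i) (measurableSet_subgraph hφ)
  refine directedWrt_of_antitone_measure_inter_ball fun x ρ => ?_
  exact antitone_of_frequently_antitone_of_tendsto
    (Frequently.of_forall fun i => (hdown i).antitone_measure_inter_ball volume x ρ)
    fun s => hconv.tendsto_measure_inter_ball hmeas hC _ ρ

theorem blowup_of_subgraph_is_directed {n : ℕ}
    (φ : EuclideanSpace ℝ (Fin n) → EReal) (hφ : Measurable φ)
    (t : ℕ → ℝ) (ht : ∀ i, 0 < t i)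
    (htlim : Filter.Tendsto t Filter.atTop (nhds 0))
    (C : Set (EuclideanSpace ℝ (Fin (n + 1)))) (hC : MeasurableSet C)
    (hconv : L1locConvergesTo (fun i => {x | t i • x ∈ subgraph φ}) C) :
    DirectedWrt C (EuclideanSpace.single (Fin.last n) 1) :=
  blowup_of_subgraph_is_directed_general φ hφ t ht C hC hconv
end

section
/- Let C ⊆ ℝ^{n+1} be a cone with vertex at the origin which coincides with its measure-theoretic interior (in particular C is open) and which is directed with respect to e_{n+1}. Then for every t > 0 the set C is weakly star-shaped with center x = (0,…,0,−t): for every y ∈ C and every 0 < τ ≤ 1 one has x + τ(y − x) ∈ C. -/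
open MeasureTheory Metric

/-- `C` is a cone with vertex `x`. -/
def IsConeWithVertex {d : ℕ} (C : Set (EuclideanSpace ℝ (Fin d)))
    (x : EuclideanSpace ℝ (Fin d)) : Prop :=
  ∀ y ∈ C, ∀ τ : ℝ, 0 < τ → x + τ • (y - x) ∈ C

lemma mInterior_isOpen {d : ℕ} (M : Set (EuclideanSpace ℝ (Fin d))) :
    IsOpen (mInterior M) := by
  rw [Metric.isOpen_iff]
  rintro x ⟨ρ, hρ, h0⟩
  refine ⟨ρ/2, by linarith, fun y hy => ?_⟩
  simp only [mem_ball] at hy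
  refine ⟨ρ/2, by linarith, measure_mono_null (fun z hz => ?_) h0⟩
  have hz1 : dist z y < ρ/2 := hz.1
  refine ⟨mem_ball.mpr ?_, hz.2⟩
  calc dist z x ≤ dist z y + dist y x := dist_triangle _ _ _
    _ < ρ/2 + ρ/2 := add_lt_add hz1 hy
    _ = ρ := by ring

theorem directed_cone_weakly_star_shaped {n : ℕ}
    (C : Set (EuclideanSpace ℝ (Fin (n + 1))))
    (hcone : IsConeWithVertex C 0)
    (hopen : C = mInterior C)
    (hdir : DirectedWrt C (EuclideanSpace.single (Fin.last n) 1)) :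
    ∀ t : ℝ, 0 < t →
      ∀ y ∈ C, ∀ τ : ℝ, 0 < τ → τ ≤ 1 →
        (-t) • EuclideanSpace.single (Fin.last n) (1 : ℝ) +
          τ • (y - (-t) • EuclideanSpace.single (Fin.last n) (1 : ℝ)) ∈ C := by
  intro t ht y hy τ hτ hτ1
  set e : EuclideanSpace ℝ (Fin (n+1)) := EuclideanSpace.single (Fin.last n) (1 : ℝ) with he
  have hC : MeasurableSet C := by
    rw [hopen]; exact (mInterior_isOpen C).measurableSet
  have hτy : τ • y ∈ C := by
    have h := hcone y hy τ hτ
    simpa using h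
  have hmem : τ • y ∈ mInterior C := hopen ▸ hτy
  obtain ⟨ρ, hρ, hnull⟩ := hmem
  -- density at τ•y is 1
  have hball_pos : ∀ z : EuclideanSpace ℝ (Fin (n+1)), (0 : ENNReal) < volume (ball z ρ) :=
    fun z => measure_ball_pos volume z hρ
  have hball_fin : ∀ z : EuclideanSpace ℝ (Fin (n+1)), volume (ball z ρ) ≠ ⊤ :=
    fun z => measure_ball_lt_top.ne
  have hinter : volume (C ∩ ball (τ • y) ρ) = volume (ball (τ • y) ρ) := by
    have h := measure_inter_add_diff (μ := volume) (ball (τ • y) ρ) hC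
    rw [hnull, add_zero] at h
    rw [Set.inter_comm] at h
    exact h
  have hf0 : approxDensity C ρ (τ • y + (0:ℝ) • e) = 1 := by
    rw [zero_smul, add_zero, approxDensity, hinter,
      ENNReal.div_self (hball_pos _).ne' (hball_fin _)]
  set s : ℝ := (τ - 1) * t with hs
  have hs0 : s ≤ 0 := by nlinarith
  have hmono := hdir (τ • y) ρ hρ hs0
  simp only at hmono
  rw [hf0] at hmono
  -- hence density at z' := τ•y + s•e is 1
  set z' : EuclideanSpace ℝ (Fin (n+1)) := τ • y + s • e with hz'
  have hge : volume (ball z' ρ) ≤ volume (C ∩ ball z' ρ) := by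
    have h1 : (1 : ENNReal) ≤ volume (C ∩ ball z' ρ) / volume (ball z' ρ) := hmono
    rw [ENNReal.le_div_iff_mul_le (Or.inl (hball_pos z').ne') (Or.inl (hball_fin z'))] at h1
    simpa using h1
  have heq : volume (C ∩ ball z' ρ) = volume (ball z' ρ) :=
    le_antisymm (measure_mono Set.inter_subset_right) hge
  have hdiff : volume (ball z' ρ \ C) = 0 := by
    have h := measure_inter_add_diff (μ := volume) (ball z' ρ) hC
    rw [Set.inter_comm, heq] at h
    have hfin := hball_fin z'
    have h' : volume (ball z' ρ) + volume (ball z' ρ \ C) = volume (ball z' ρ) + 0 := by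
      rw [add_zero]; exact h
    exact (ENNReal.add_right_inj hfin).mp h'
  have hz'C : z' ∈ C := by
    rw [hopen]
    exact ⟨ρ, hρ, hdiff⟩
  have hpt : (-t) • e + τ • (y - (-t) • e) = z' := by
    rw [hz', hs]
    module
  rw [← he] at *
  rw [hpt]
  exact hz'C
end

section
/- Let c > 0 and let u : S^n → ℝ be measurable with u ≥ c, and let E := {s·ω : ω ∈ S^n, 0 < s < u(ω)} ⊆ ℝ^{n+1} be the subgraph of u over S^n in polar coordinates. Let z₀ = (0,…,0,z₀^{n+1}) with z₀^{n+1} > 0, let t_i > 0 with t_i → 0, and suppose the sets E_{t_i} := {y ∈ ℝ^{n+1} : z₀ + t_i(y − z₀) ∈ E} converge in L¹_loc(ℝ^{n+1}) to a set C which is a cone and whose measure-theoretic boundary ∂C has Lebesgue measure zero. Then there exists a measurable function v : ℝ^n → [−∞,+∞] such that C coincides with the subgraph sub v up to a set of Lebesgue measure zero. -/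
open MeasureTheory Metric

/-!
Each blow-up `E_t` of the polar subgraph `E` (which is star-shaped about `0`) is mapped into itself
by an affine map `y ↦ τ y - s e`, with `τ → 1` as `t → 0`: seen from `z₀` on the positive vertical
axis, shrinking towards `0` is shrinking towards `z₀` followed by a push downwards. In the `L¹_loc`
limit `C`, these maps carry most of a ball in which `C` has full measure into a slightly larger ball
below it, which therefore cannot be `C`-null: no point below a measure-theoretic interior point of
`C` is a measure-theoretic exterior point. Since `∂C` is null, `C` agrees a.e. with its open
measure-theoretic interior `U`, whose vertical sections are, up to `∂C`, downward rays; so `U`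
agrees a.e. with the subgraph of the lower semicontinuous function `v(x̂) = sup {a | (x̂, a) ∈ U}`,
whose graph is null by Fubini.
-/
open Filter Set Topology Module
open scoped symmDiff

lemma measure_inter_compl_support_restrict {X : Type*} [TopologicalSpace X] [MeasurableSpace X]
    [OpensMeasurableSpace X] [HereditarilyLindelofSpace X] (μ : Measure X) (M : Set X) :
    μ (M ∩ (μ.restrict M).supportᶜ) = 0 := by
  rw [inter_comm, ← Measure.restrict_apply Measure.isOpen_compl_support.measurableSet]
  exact Measure.measure_compl_support

section MeasureTheoreticBoundary

variable {d : ℕ}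

lemma mExterior_eq_compl_support (M : Set (EuclideanSpace ℝ (Fin d))) :
    mExterior M = (volume.restrict M).supportᶜ := by
  ext x
  simp [mExterior, nhds_basis_ball.notMem_measureSupport, Measure.restrict_apply measurableSet_ball,
    inter_comm]

lemma mInterior_eq_compl_support (M : Set (EuclideanSpace ℝ (Fin d))) :
    mInterior M = (volume.restrict Mᶜ).supportᶜ := by
  ext x
  simp [mInterior, nhds_basis_ball.notMem_measureSupport, Measure.restrict_apply measurableSet_ball,
    sdiff_eq]

lemma isOpen_mInterior (M : Set (EuclideanSpace ℝ (Fin d))) : IsOpen (mInterior M) :=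
  mInterior_eq_compl_support M ▸ Measure.isOpen_compl_support

lemma ae_eq_mInterior {M : Set (EuclideanSpace ℝ (Fin d))} (hM : volume (mBoundary M) = 0) :
    M =ᵐ[volume] mInterior M := by
  have hext : volume (M ∩ mExterior M) = 0 := by
    rw [mExterior_eq_compl_support]; exact measure_inter_compl_support_restrict volume M
  have hint : volume (mInterior M \ M) = 0 := by
    rw [sdiff_eq, inter_comm, mInterior_eq_compl_support]
    exact measure_inter_compl_support_restrict volume Mᶜ
  refine ae_eq_set.2 ⟨measure_mono_null (fun x hx => ?_) (measure_union_null hext hM), hint⟩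
  by_cases hxe : x ∈ mExterior M
  · exact Or.inl ⟨hx.1, hxe⟩
  · exact Or.inr fun h => h.elim hx.2 hxe

end MeasureTheoreticBoundary

section SetConvergence

variable {α ι : Type*} [MeasurableSpace α] {μ : Measure α} {l : Filter ι}
  {A : ι → Set α} {C K S : Set α}

lemma tendsto_measure_inter_of_measure_diff_eq_zero (hSK : S ⊆ K)
    (hconv : Tendsto (fun i => μ (K ∩ A i ∆ C)) l (𝓝 0)) (hSC : μ (S \ C) = 0) (hS : μ S ≠ ⊤) :
    Tendsto (fun i => μ (S ∩ A i)) l (𝓝 (μ S)) := by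
  have hlower : ∀ i, μ S - μ (K ∩ A i ∆ C) ≤ μ (S ∩ A i) := by
    intro i
    have hdiff : μ (S \ A i) ≤ μ (K ∩ A i ∆ C) := by
      calc μ (S \ A i) ≤ μ (K ∩ A i ∆ C ∪ S \ C) :=
            measure_mono fun y hy => by
              by_cases hyC : y ∈ C
              · exact Or.inl ⟨hSK hy.1, Or.inr ⟨hyC, hy.2⟩⟩
              · exact Or.inr ⟨hy.1, hyC⟩
        _ ≤ μ (K ∩ A i ∆ C) + μ (S \ C) := measure_union_le _ _
        _ = μ (K ∩ A i ∆ C) := by rw [hSC, add_zero]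
    rw [tsub_le_iff_right]
    calc μ S ≤ μ (S ∩ A i) + μ (S \ A i) := measure_le_inter_add_sdiff μ S (A i)
      _ ≤ μ (S ∩ A i) + μ (K ∩ A i ∆ C) := by gcongr
  have := ENNReal.Tendsto.sub tendsto_const_nhds hconv (Or.inl hS)
  rw [tsub_zero] at this
  exact tendsto_of_tendsto_of_tendsto_of_le_of_le this tendsto_const_nhds hlower
    fun i => measure_mono inter_subset_left

lemma tendsto_measure_inter_of_measure_inter_eq_zero (hSK : S ⊆ K)
    (hconv : Tendsto (fun i => μ (K ∩ A i ∆ C)) l (𝓝 0)) (hSC : μ (C ∩ S) = 0) :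
    Tendsto (fun i => μ (A i ∩ S)) l (𝓝 0) := by
  refine tendsto_of_tendsto_of_tendsto_of_le_of_le tendsto_const_nhds hconv (fun _ => bot_le)
    fun i => ?_
  calc μ (A i ∩ S) ≤ μ (K ∩ A i ∆ C ∪ C ∩ S) :=
        measure_mono fun y hy => by
          by_cases hyC : y ∈ C
          · exact Or.inr ⟨hyC, hy.2⟩
          · exact Or.inl ⟨hSK hy.2, Or.inl ⟨hy.1, hyC⟩⟩
    _ ≤ μ (K ∩ A i ∆ C) + μ (C ∩ S) := measure_union_le _ _
    _ = μ (K ∩ A i ∆ C) := by rw [hSC, add_zero]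

end SetConvergence

lemma L1locConvergesTo.tendsto_volume_inter_symmDiff {d : ℕ}
    {A : ℕ → Set (EuclideanSpace ℝ (Fin d))} {C : Set (EuclideanSpace ℝ (Fin d))}
    (h : L1locConvergesTo A C)
    (hA : ∀ i, MeasurableSet (A i)) (hC : MeasurableSet C) {K : Set (EuclideanSpace ℝ (Fin d))}
    (hK : IsCompact K) : Tendsto (fun i => volume (K ∩ A i ∆ C)) atTop (𝓝 0) := by
  have hfin : ∀ i, volume (K ∩ A i ∆ C) ≠ ⊤ :=
    fun i => ne_top_of_le_ne_top hK.measure_lt_top.ne (measure_mono inter_subset_left)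
  rw [← ENNReal.tendsto_toReal_iff hfin ENNReal.zero_ne_top, ENNReal.toReal_zero]
  convert h K hK using 2 with i
  simp_rw [← Set.abs_indicator_symmDiff,
    abs_of_nonneg (indicator_nonneg (fun _ _ => zero_le_one) _)]
  rw [setIntegral_indicator ((hA i).symmDiff hC)]
  simp [measureReal_def]

lemma addHaar_image_const_add_smul {E : Type*} [NormedAddCommGroup E] [NormedSpace ℝ E]
    [MeasurableSpace E] [BorelSpace E] [FiniteDimensional ℝ E] (μ : Measure E)
    [μ.IsAddHaarMeasure] (w : E) (τ : ℝ) (S : Set E) :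
    μ ((fun y => w + τ • y) '' S) = ENNReal.ofReal (|τ| ^ finrank ℝ E) * μ S := by
  rw [← image_image (fun y => w + y) (τ • ·), image_add_left, measure_preimage_add,
    image_smul, Measure.addHaar_smul, abs_pow]

lemma notMem_mExterior_add_of_eventually_mapsTo {d : ℕ} {ι : Type*} {l : Filter ι} [l.NeBot]
    {A : ι → Set (EuclideanSpace ℝ (Fin d))} {C : Set (EuclideanSpace ℝ (Fin d))}
    (hconv : ∀ K, IsCompact K → Tendsto (fun i => volume (K ∩ A i ∆ C)) l (𝓝 0))
    {τ : ι → ℝ} (hτ : Tendsto τ l (𝓝 1)) {w : EuclideanSpace ℝ (Fin d)}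
    (hmaps : ∀ᶠ i in l, MapsTo (fun y => w + τ i • y) (A i) (A i))
    {x : EuclideanSpace ℝ (Fin d)} (hx : x ∈ mInterior C) : x + w ∉ mExterior C := by
  rintro ⟨ρ₂, hρ₂, hext⟩
  obtain ⟨ρ₁, hρ₁, hint⟩ := hx
  set r := min ρ₁ ρ₂ / 2
  have hr : 0 < r := by positivity
  have hB : Tendsto (fun i => volume (ball x r ∩ A i)) l (𝓝 (volume (ball x r))) :=
    tendsto_measure_inter_of_measure_diff_eq_zero ball_subset_closedBall
      (hconv _ (isCompact_closedBall x r))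
      (measure_mono_null (sdiff_subset_sdiff_left (ball_subset_ball (by grind))) hint)
      measure_ball_lt_top.ne
  have hB' : Tendsto (fun i => volume (A i ∩ ball (x + w) (2 * r))) l (𝓝 0) :=
    tendsto_measure_inter_of_measure_inter_eq_zero ball_subset_closedBall
      (hconv _ (isCompact_closedBall _ _))
      (measure_mono_null (inter_subset_inter_right _ (ball_subset_ball (by grind))) hext)
  have hscale : Tendsto (fun i => ENNReal.ofReal (|τ i| ^ d)) l (𝓝 1) := by
    simpa only [abs_one, one_pow, ENNReal.ofReal_one] using ENNReal.tendsto_ofReal (hτ.abs.pow d)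
  have himage := ENNReal.Tendsto.mul hscale (Or.inl one_ne_zero) hB
    (Or.inr ENNReal.one_ne_top)
  rw [one_mul] at himage
  have hnear : Tendsto (fun i => |τ i| * r + |τ i - 1| * ‖x‖) l (𝓝 r) := by
    simpa using ((hτ.abs.mul_const r).add ((hτ.sub_const 1).abs.mul_const ‖x‖))
  have hmapsB : ∀ᶠ i in l, MapsTo (fun y => w + τ i • y) (ball x r) (ball (x + w) (2 * r)) := by
    filter_upwards [hnear.eventually_lt_const (by linarith : r < 2 * r)] with i hi y hy
    rw [mem_ball, dist_eq_norm]
    calc ‖w + τ i • y - (x + w)‖ = ‖τ i • (y - x) + (τ i - 1) • x‖ := by congr 1; module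
      _ ≤ |τ i| * ‖y - x‖ + |τ i - 1| * ‖x‖ := by
          rw [← Real.norm_eq_abs, ← Real.norm_eq_abs, ← norm_smul, ← norm_smul]
          exact norm_add_le _ _
      _ ≤ |τ i| * r + |τ i - 1| * ‖x‖ := by
          gcongr; exact (mem_ball_iff_norm.1 hy).le
      _ < 2 * r := hi
  have hle : ∀ᶠ i in l, ENNReal.ofReal (|τ i| ^ d) * volume (ball x r ∩ A i)
      ≤ volume (A i ∩ ball (x + w) (2 * r)) := by
    filter_upwards [hmaps, hmapsB] with i hA hball
    calc ENNReal.ofReal (|τ i| ^ d) * volume (ball x r ∩ A i)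
        = volume ((fun y => w + τ i • y) '' (ball x r ∩ A i)) := by
          rw [addHaar_image_const_add_smul, finrank_euclideanSpace_fin]
      _ ≤ volume (A i ∩ ball (x + w) (2 * r)) :=
          measure_mono (image_subset_iff.2 fun y hy => ⟨hA hy.2, hball hy.1⟩)
  exact (measure_ball_pos volume x hr).ne'
    (nonpos_iff_eq_zero.1 (le_of_tendsto_of_tendsto himage hB' hle))

section Polar

variable {X : Type*} [NormedAddCommGroup X] [NormedSpace ℝ X]

def polarSubgraph (u : sphere (0 : X) 1 → ℝ) : Set X :=
  {x | ∃ ω : sphere (0 : X) 1, ∃ s : ℝ, 0 < s ∧ s < u ω ∧ x = s • (ω : X)}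

lemma smul_mem_polarSubgraph {u : sphere (0 : X) 1 → ℝ} {x : X} (hx : x ∈ polarSubgraph u)
    {τ : ℝ} (hτ₀ : 0 < τ) (hτ₁ : τ ≤ 1) : τ • x ∈ polarSubgraph u := by
  obtain ⟨ω, s, hs, hsu, rfl⟩ := hx
  exact ⟨ω, τ * s, by positivity, by nlinarith, by rw [smul_smul]⟩

lemma measurableSet_polarSubgraph [MeasurableSpace X] [BorelSpace X] [SecondCountableTopology X]
    {u : sphere (0 : X) 1 → ℝ} (hu : Measurable u) : MeasurableSet (polarSubgraph u) := by
  have hS : MeasurableSet {p : sphere (0 : X) 1 × Ioi (0 : ℝ) | (p.2 : ℝ) < u p.1} :=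
    measurableSet_lt (measurable_subtype_coe.comp measurable_snd) (hu.comp measurable_fst)
  convert (measurableSet_singleton (0 : X)).compl.subtype_image
    (hS.preimage (homeomorphUnitSphereProd X).continuous.measurable)
  ext x
  constructor
  · rintro ⟨ω, s, hs, hsu, rfl⟩
    refine ⟨(homeomorphUnitSphereProd X).symm (ω, ⟨s, hs⟩), ?_, ?_⟩
    · rw [mem_preimage, Homeomorph.apply_symm_apply]
      exact hsu
    · rw [homeomorphUnitSphereProd_symm_apply_coe]
  · rintro ⟨y, hy, rfl⟩
    set p := homeomorphUnitSphereProd X y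
    refine ⟨p.1, p.2, p.2.2, hy, ?_⟩
    rw [← homeomorphUnitSphereProd_symm_apply_coe, Homeomorph.symm_apply_apply]

end Polar

section BlowUp

variable {V : Type*} [AddCommGroup V] [Module ℝ V]

def blowup (E : Set V) (z₀ : V) (t : ℝ) : Set V :=
  {y | z₀ + t • (y - z₀) ∈ E}

lemma mapsTo_blowup {E : Set V}
    (hE : ∀ p ∈ E, ∀ τ : ℝ, 0 < τ → τ ≤ 1 → τ • p ∈ E) (z₀ : V) {t σ : ℝ} (ht : t < 1)
    (hσt : 0 ≤ σ * t) (hτ : 0 < 1 - σ * t / (1 - t)) :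
    MapsTo (fun y => -(σ • z₀) + (1 - σ * t / (1 - t)) • y) (blowup E z₀ t) (blowup E z₀ t) := by
  intro y hy
  have hdilate : z₀ + t • (-(σ • z₀) + (1 - σ * t / (1 - t)) • y - z₀)
      = (1 - σ * t / (1 - t)) • (z₀ + t • (y - z₀)) := by
    have : 1 - t ≠ 0 := by linarith
    match_scalars <;> field_simp; ring
  simp only [blowup, mem_ofPred_eq, hdilate]
  exact hE _ hy _ hτ (by have : 0 ≤ σ * t / (1 - t) := div_nonneg hσt (by linarith); linarith)

lemma notMem_mExterior_sub_smul_of_blowup {d : ℕ} {E : Set (EuclideanSpace ℝ (Fin d))}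
    (hE : ∀ p ∈ E, ∀ τ : ℝ, 0 < τ → τ ≤ 1 → τ • p ∈ E) (hEmeas : MeasurableSet E)
    {z₀ : EuclideanSpace ℝ (Fin d)} {t : ℕ → ℝ} (ht : ∀ i, 0 < t i)
    (htlim : Tendsto t atTop (𝓝 0)) {C : Set (EuclideanSpace ℝ (Fin d))} (hC : MeasurableSet C)
    (hconv : L1locConvergesTo (fun i => blowup E z₀ (t i)) C) {x : EuclideanSpace ℝ (Fin d)}
    (hx : x ∈ mInterior C) {σ : ℝ} (hσ : 0 < σ) : x - σ • z₀ ∉ mExterior C := by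
  have hmeas : ∀ i, MeasurableSet (blowup E z₀ (t i)) := fun i =>
    hEmeas.preimage (by fun_prop : Continuous fun y => z₀ + t i • (y - z₀)).measurable
  have hτ : Tendsto (fun i => 1 - σ * t i / (1 - t i)) atTop (𝓝 1) := by
    simpa using tendsto_const_nhds.sub
      ((htlim.const_mul σ).div (tendsto_const_nhds.sub htlim) (by norm_num))
  have hmaps : ∀ᶠ i in atTop, MapsTo (fun y => -(σ • z₀) + (1 - σ * t i / (1 - t i)) • y)
      (blowup E z₀ (t i)) (blowup E z₀ (t i)) := by
    filter_upwards [htlim.eventually_lt_const one_pos, hτ.eventually_const_lt one_pos]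
      with i ht1 hτi
    exact mapsTo_blowup hE z₀ ht1 (mul_nonneg hσ.le (ht i).le) hτi
  rw [sub_eq_add_neg]
  exact notMem_mExterior_add_of_eventually_mapsTo
    (fun K hK => hconv.tendsto_volume_inter_symmDiff hmeas hC hK) hτ hmaps hx

end BlowUp

section Subgraph

variable {n : ℕ}

def snocPoint (p : EuclideanSpace ℝ (Fin n)) (a : ℝ) : EuclideanSpace ℝ (Fin (n + 1)) :=
  WithLp.toLp 2 (Fin.snoc p.ofLp a)

@[simp]
lemma snocPoint_apply_last (p : EuclideanSpace ℝ (Fin n)) (a : ℝ) :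
    snocPoint p a (Fin.last n) = a := by
  simp [snocPoint]

@[simp]
lemma toLp_snocPoint_apply_castSucc (p : EuclideanSpace ℝ (Fin n)) (a : ℝ) :
    (WithLp.toLp 2 fun i : Fin n => snocPoint p a i.castSucc) = p := by
  simp [snocPoint]

lemma snocPoint_eta (x : EuclideanSpace ℝ (Fin (n + 1))) :
    snocPoint (WithLp.toLp 2 fun i : Fin n => x i.castSucc) (x (Fin.last n)) = x := by
  rw [snocPoint]
  exact congrArg (WithLp.toLp 2) (Fin.snoc_init_self x.ofLp)

lemma snocPoint_sub_smul_single (p : EuclideanSpace ℝ (Fin n)) (a b : ℝ) :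
    snocPoint p a - b • EuclideanSpace.single (Fin.last n) 1 = snocPoint p (a - b) := by
  ext i
  induction i using Fin.lastCases <;> simp [snocPoint, (Fin.castSucc_lt_last _).ne]

lemma continuous_snocPoint_left (a : ℝ) :
    Continuous fun p : EuclideanSpace ℝ (Fin n) => snocPoint p a := by
  unfold snocPoint
  fun_prop

lemma volume_eq_zero_of_forall_volume_snocPoint {S : Set (EuclideanSpace ℝ (Fin (n + 1)))}
    (hS : MeasurableSet S) (h : ∀ p, volume {a : ℝ | snocPoint p a ∈ S} = 0) : volume S = 0 := by
  have hmp : MeasurePreserving (fun q : ℝ × (Fin n → ℝ) => snocPoint (WithLp.toLp 2 q.2) q.1) := by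
    convert (PiLp.volume_preserving_toLp (Fin (n + 1))).comp
      (volume_preserving_piFinSuccAbove (fun _ : Fin (n + 1) => ℝ) (Fin.last n)).symm using 1
    ext q : 1
    simp [snocPoint, MeasurableEquiv.piFinSuccAbove_symm_apply, Fin.snocEquiv]
  rw [← hmp.measure_preimage hS.nullMeasurableSet, Measure.volume_eq_prod,
    Measure.prod_apply_symm (hS.preimage hmp.measurable)]
  exact (lintegral_congr fun y => h (WithLp.toLp 2 y)).trans lintegral_zero

noncomputable def sliceSup (U : Set (EuclideanSpace ℝ (Fin (n + 1))))
    (p : EuclideanSpace ℝ (Fin n)) : EReal :=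
  sSup ((↑) '' {a : ℝ | snocPoint p a ∈ U})

lemma lowerSemicontinuous_sliceSup {U : Set (EuclideanSpace ℝ (Fin (n + 1)))} (hU : IsOpen U) :
    LowerSemicontinuous (sliceSup U) := by
  intro p y hy
  obtain ⟨_, ⟨a, ha, rfl⟩, hya⟩ := lt_sSup_iff.1 hy
  filter_upwards [(hU.preimage (continuous_snocPoint_left a)).mem_nhds ha] with q hq
  exact hya.trans_le (le_sSup ⟨a, hq, rfl⟩)

lemma volume_graph_eq_zero {v : EuclideanSpace ℝ (Fin n) → EReal} (hv : Measurable v) :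
    volume {x : EuclideanSpace ℝ (Fin (n + 1)) |
      (x (Fin.last n) : EReal) = v (WithLp.toLp 2 fun i : Fin n => x i.castSucc)} = 0 := by
  refine volume_eq_zero_of_forall_volume_snocPoint (measurableSet_eq_fun ?_ ?_) fun p => ?_
  · fun_prop
  · exact hv.comp (by fun_prop)
  · refine Set.Subsingleton.measure_zero (fun a ha b hb => ?_) _
    simp only [mem_ofPred_eq, snocPoint_apply_last, toLp_snocPoint_apply_castSucc] at ha hb
    exact EReal.coe_injective (ha.trans hb.symm)

lemma symmDiff_subgraph_sliceSup_subset {U N : Set (EuclideanSpace ℝ (Fin (n + 1)))}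
    (hdown : ∀ x ∈ U, ∀ s : ℝ, 0 < s →
      x - s • EuclideanSpace.single (Fin.last n) 1 ∈ U ∪ N) :
    U ∆ subgraph (sliceSup U) ⊆ N ∪ {x | (x (Fin.last n) : EReal) =
      sliceSup U (WithLp.toLp 2 fun i : Fin n => x i.castSucc)} := by
  intro x hx
  set p : EuclideanSpace ℝ (Fin n) := WithLp.toLp 2 fun i : Fin n => x i.castSucc
  have hx_eta : snocPoint p (x (Fin.last n)) = x := snocPoint_eta x
  rcases hx with ⟨hxU, hxv⟩ | ⟨hxv, hxU⟩
  · have hx_slice : snocPoint p (x (Fin.last n)) ∈ U := by rwa [hx_eta]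
    exact Or.inr (le_antisymm (le_sSup ⟨_, hx_slice, rfl⟩) (not_lt.1 hxv))
  · obtain ⟨_, ⟨a, ha, rfl⟩, hlt⟩ := lt_sSup_iff.1 (show _ < sliceSup U _ from hxv)
    have hbelow := hdown _ ha (a - x (Fin.last n)) (sub_pos.2 (EReal.coe_lt_coe_iff.1 hlt))
    rw [snocPoint_sub_smul_single, sub_sub_cancel, hx_eta] at hbelow
    exact Or.inl (hbelow.resolve_left hxU)

lemma exists_measurable_ae_eq_subgraph {U N : Set (EuclideanSpace ℝ (Fin (n + 1)))}
    (hU : IsOpen U) (hN : volume N = 0)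
    (hdown : ∀ x ∈ U, ∀ s : ℝ, 0 < s →
      x - s • EuclideanSpace.single (Fin.last n) 1 ∈ U ∪ N) :
    ∃ v : EuclideanSpace ℝ (Fin n) → EReal, Measurable v ∧ U =ᵐ[volume] subgraph v := by
  have hv := (lowerSemicontinuous_sliceSup hU).measurable
  exact ⟨sliceSup U, hv, measure_symmDiff_eq_zero_iff.1 (measure_mono_null
    (symmDiff_subgraph_sliceSup_subset hdown) (measure_union_null hN (volume_graph_eq_zero hv)))⟩

end Subgraph

theorem blowup_of_polar_subgraph_is_subgraph_general {n : ℕ}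
    (u : Metric.sphere (0 : EuclideanSpace ℝ (Fin (n + 1))) 1 → ℝ)
    (hu : Measurable u)
    (E : Set (EuclideanSpace ℝ (Fin (n + 1))))
    (hE : E = {x | ∃ ω : Metric.sphere (0 : EuclideanSpace ℝ (Fin (n + 1))) 1,
      ∃ s : ℝ, 0 < s ∧ s < u ω ∧ x = s • (ω : EuclideanSpace ℝ (Fin (n + 1)))})
    (z : ℝ) (hz : 0 < z)
    (t : ℕ → ℝ) (ht : ∀ i, 0 < t i)
    (htlim : Filter.Tendsto t Filter.atTop (nhds 0))
    (C : Set (EuclideanSpace ℝ (Fin (n + 1)))) (hCmeas : MeasurableSet C)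
    (hconv : L1locConvergesTo
      (fun i => {y | z • EuclideanSpace.single (Fin.last n) (1 : ℝ) +
        t i • (y - z • EuclideanSpace.single (Fin.last n) (1 : ℝ)) ∈ E}) C)
    (hbdry : volume (mBoundary C) = 0) :
    ∃ v : EuclideanSpace ℝ (Fin n) → EReal,
      Measurable v ∧ volume (symmDiff C (subgraph v)) = 0 := by
  have hEmeas : MeasurableSet E := hE ▸ measurableSet_polarSubgraph hu
  have hEstar : ∀ p ∈ E, ∀ τ : ℝ, 0 < τ → τ ≤ 1 → τ • p ∈ E :=
    hE ▸ fun p hp τ hτ₀ hτ₁ => smul_mem_polarSubgraph hp hτ₀ hτ₁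
  have hdown : ∀ x ∈ mInterior C, ∀ s : ℝ, 0 < s →
      x - s • EuclideanSpace.single (Fin.last n) 1 ∈ mInterior C ∪ mBoundary C := by
    intro x hx s hs
    have hext := notMem_mExterior_sub_smul_of_blowup hEstar hEmeas ht htlim hCmeas hconv hx
      (div_pos hs hz)
    rw [smul_smul, div_mul_cancel₀ s hz.ne'] at hext
    exact or_iff_not_imp_left.2 fun hint hmem => hmem.elim hint hext
  obtain ⟨v, hv, hUv⟩ := exists_measurable_ae_eq_subgraph (isOpen_mInterior C) hbdry hdown
  exact ⟨v, hv, measure_symmDiff_eq_zero_iff.2 ((ae_eq_mInterior hbdry).trans hUv)⟩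

theorem blowup_of_polar_subgraph_is_subgraph {n : ℕ}
    (c : ℝ) (hc : 0 < c)
    (u : Metric.sphere (0 : EuclideanSpace ℝ (Fin (n + 1))) 1 → ℝ)
    (hu : Measurable u) (huc : ∀ ω, c ≤ u ω)
    (E : Set (EuclideanSpace ℝ (Fin (n + 1))))
    (hE : E = {x | ∃ ω : Metric.sphere (0 : EuclideanSpace ℝ (Fin (n + 1))) 1,
      ∃ s : ℝ, 0 < s ∧ s < u ω ∧ x = s • (ω : EuclideanSpace ℝ (Fin (n + 1)))})
    (z : ℝ) (hz : 0 < z)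
    (t : ℕ → ℝ) (ht : ∀ i, 0 < t i)
    (htlim : Filter.Tendsto t Filter.atTop (nhds 0))
    (C : Set (EuclideanSpace ℝ (Fin (n + 1)))) (hCmeas : MeasurableSet C)
    (hconv : L1locConvergesTo
      (fun i => {y | z • EuclideanSpace.single (Fin.last n) (1 : ℝ) +
        t i • (y - z • EuclideanSpace.single (Fin.last n) (1 : ℝ)) ∈ E}) C)
    (hcone : IsConeWithVertex C 0)
    (hbdry : volume (mBoundary C) = 0) :
    ∃ v : EuclideanSpace ℝ (Fin n) → EReal,
      Measurable v ∧ volume (symmDiff C (subgraph v)) = 0 :=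
  blowup_of_polar_subgraph_is_subgraph_general u hu E hE z hz t ht htlim C hCmeas hconv hbdry
end

section
/- Let φ : ℝ^n → [−∞,+∞] be a measurable function. Then its subgraph sub φ ⊆ ℝ^{n+1} is directed with respect to e_{n+1}: for every x ∈ ℝ^{n+1} and every ρ > 0 the function t ↦ D_ρ(sub φ, x + t·e_{n+1}) is monotone decreasing on ℝ. -/
open MeasureTheory Metric

/-! All balls of radius `ρ` have the same volume, so only the numerators of the densities
matter. Translation by `(s - t) • v` is measure preserving and carries `ball (x + t • v) ρ` onto
`ball (x + s • v) ρ`; if `M` is stable under moving backwards along `v`, its preimage of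
`M ∩ ball (x + s • v) ρ` lies in `M ∩ ball (x + t • v) ρ`. A subgraph is stable under lowering
the last coordinate. -/

theorem directedWrt_of_mem_of_add_smul_mem {d : ℕ} {M : Set (EuclideanSpace ℝ (Fin d))}
    {v : EuclideanSpace ℝ (Fin d)} (hM : ∀ y (c : ℝ), 0 ≤ c → y + c • v ∈ M → y ∈ M) :
    DirectedWrt M v := by
  intro x ρ _ t s hts
  simp only [approxDensity, Measure.addHaar_ball_center]
  refine ENNReal.div_le_div_right ?_ _
  have hshift : x + s • v = (x + t • v) + (s - t) • v := by module
  calc volume (M ∩ ball (x + s • v) ρ)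
      = volume ((· + (s - t) • v) ⁻¹' (M ∩ ball (x + s • v) ρ)) :=
        (measure_preimage_add_right _ _ _).symm
    _ ≤ volume (M ∩ ball (x + t • v) ρ) := by
        refine measure_mono fun y ⟨hyM, hyB⟩ => ⟨hM y _ (sub_nonneg.2 hts) hyM, ?_⟩
        rwa [hshift, mem_ball, dist_add_right] at hyB

theorem mem_subgraph_of_add_smul_mem {n : ℕ} {φ : EuclideanSpace ℝ (Fin n) → EReal}
    {y : EuclideanSpace ℝ (Fin (n + 1))} {c : ℝ} (hc : 0 ≤ c)
    (h : y + c • EuclideanSpace.single (Fin.last n) 1 ∈ subgraph φ) : y ∈ subgraph φ := by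
  set z : EuclideanSpace ℝ (Fin (n + 1)) := y + c • EuclideanSpace.single (Fin.last n) 1
  have hbase : (fun i : Fin n => z i.castSucc) = fun i => y i.castSucc := by
    ext i
    simp [z, (Fin.castSucc_lt_last i).ne]
  have hheight : z (Fin.last n) = y (Fin.last n) + c := by
    simp [z]
  simp only [subgraph, Set.mem_ofPred_eq, hbase, hheight] at h ⊢
  exact lt_of_le_of_lt (EReal.coe_le_coe_iff.2 (le_add_of_nonneg_right hc)) h

theorem subgraph_is_directed_general {n : ℕ}
    (φ : EuclideanSpace ℝ (Fin n) → EReal) :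
    DirectedWrt (subgraph φ) (EuclideanSpace.single (Fin.last n) 1) :=
  directedWrt_of_mem_of_add_smul_mem fun _ _ hc => mem_subgraph_of_add_smul_mem hc

theorem subgraph_is_directed {n : ℕ}
    (φ : EuclideanSpace ℝ (Fin n) → EReal) (hφ : Measurable φ) :
    DirectedWrt (subgraph φ) (EuclideanSpace.single (Fin.last n) 1) :=
  subgraph_is_directed_general φ
end
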